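/- arXiv:2012.11920 — 5 statements merged into one kernel-verified Lean document; each statement's English description precedes it below -/
import Mathlib

section
/- Let p ≥ r ≥ 1 be integers, let H be a p×r real matrix with HᵀH = I_r, let L = diag(l₁,…,l_r) be an r×r diagonal real matrix with all l_i ≠ 0, and set S = H L Hᵀ and S⁺ = H L⁻¹ Hᵀ. Let Σ be a p×p real positive definite matrix, a₀ a real number, Ψ = diag(ψ₁,…,ψ_r) an r×r diagonal real matrix, and define the estimator Σ̂_Ψ = a₀ H L (I_r + Ψ) Hᵀ. Then tr(S⁺ Σ (Σ⁻¹ Σ̂_Ψ − I_p)²) − tr(S⁺ Σ (Σ⁻¹ (a₀ S) − I_p)²) = a₀² tr(Σ⁻¹ H L (2Ψ + Ψ²) Hᵀ) − 2 a₀ tr(Ψ). -/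
open Matrix

lemma loss_helper
    (p r : ℕ)
    (H : Matrix (Fin p) (Fin r) ℝ) (hH : Hᵀ * H = 1)
    (D Di : Matrix (Fin r) (Fin r) ℝ) (hDiD : Di * D = 1)
    (Sgm : Matrix (Fin p) (Fin p) ℝ) (hSg : Sgm * Sgm⁻¹ = 1)
    (a₀ : ℝ) (Z : Matrix (Fin r) (Fin r) ℝ) :
    Matrix.trace ((H * Di * Hᵀ) * Sgm *
        ((Sgm⁻¹ * (a₀ • (H * (D * (Z * Hᵀ)))) - 1) ^ 2)) =
      a₀ ^ 2 * Matrix.trace (Sgm⁻¹ * (H * (D * (Z * (Z * Hᵀ))))) -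
        2 * a₀ * Matrix.trace Z + Matrix.trace ((H * Di * Hᵀ) * Sgm) := by
  have hH' : ∀ W : Matrix (Fin r) (Fin p) ℝ, Hᵀ * (H * W) = W := fun W => by
    rw [← Matrix.mul_assoc, hH, Matrix.one_mul]
  have hD' : ∀ W : Matrix (Fin r) (Fin p) ℝ, Di * (D * W) = W := fun W => by
    rw [← Matrix.mul_assoc, hDiD, Matrix.one_mul]
  set M : Matrix (Fin p) (Fin p) ℝ := H * Di * Hᵀ * Sgm with hM
  set E : Matrix (Fin p) (Fin p) ℝ := a₀ • (H * (D * (Z * Hᵀ))) with hE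
  set X : Matrix (Fin p) (Fin p) ℝ := Sgm⁻¹ * E with hX
  have hsq : (X - 1) ^ 2 = X * X - (X + X) + 1 := by noncomm_ring
  have hMX : M * X = (H * Di * Hᵀ) * E := by
    rw [hM, hX, Matrix.mul_assoc (H * Di * Hᵀ), ← Matrix.mul_assoc Sgm, hSg, Matrix.one_mul]
  have hSpE : (H * Di * Hᵀ) * E = a₀ • (H * (Z * Hᵀ)) := by
    rw [hE, Matrix.mul_smul]
    congr 1
    simp only [Matrix.mul_assoc, hH', hD']
  have hMX' : M * X = a₀ • (H * (Z * Hᵀ)) := hMX.trans hSpE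
  have t2 : Matrix.trace (M * X) = a₀ * Matrix.trace Z := by
    rw [hMX', Matrix.trace_smul, Matrix.trace_mul_comm, Matrix.mul_assoc, hH,
      Matrix.mul_one, smul_eq_mul]
  have t1 : Matrix.trace (M * (X * X)) =
      a₀ ^ 2 * Matrix.trace (Sgm⁻¹ * (H * (D * (Z * (Z * Hᵀ))))) := by
    rw [← Matrix.mul_assoc, hMX', hX, hE]
    simp only [Matrix.smul_mul, Matrix.mul_smul, smul_smul, Matrix.trace_smul, smul_eq_mul]
    rw [sq]
    congr 1
    rw [Matrix.trace_mul_comm]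
    congr 1
    simp only [Matrix.mul_assoc, hH']
  rw [hsq]
  rw [Matrix.mul_add, Matrix.mul_sub, Matrix.mul_add, Matrix.mul_one, Matrix.trace_add,
    Matrix.trace_sub, Matrix.trace_add, t1, t2]
  ring

/-- Data-based loss difference between the orthogonally invariant estimator
`Σ̂_Ψ = a₀ H L (I_r + Ψ) Hᵀ` and the usual estimator `a₀ S`:
it equals `a₀² tr(Σ⁻¹ H L (2Ψ + Ψ²) Hᵀ) − 2 a₀ tr(Ψ)`. -/
theorem loss_difference_orthogonally_invariant
    (p r : ℕ) (hr : 1 ≤ r) (hpr : r ≤ p)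
    (H : Matrix (Fin p) (Fin r) ℝ) (hH : Hᵀ * H = 1)
    (l : Fin r → ℝ) (hl : ∀ i, l i ≠ 0)
    (Sgm : Matrix (Fin p) (Fin p) ℝ) (hSgm : Sgm.PosDef)
    (a₀ : ℝ) (ψ : Fin r → ℝ) :
    let S := H * Matrix.diagonal l * Hᵀ
    let Sp := H * (Matrix.diagonal l)⁻¹ * Hᵀ
    let Ψ := Matrix.diagonal ψ
    let SigHat := a₀ • (H * Matrix.diagonal l * (1 + Ψ) * Hᵀ)
    Matrix.trace (Sp * Sgm * (Sgm⁻¹ * SigHat - 1) ^ 2) -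
        Matrix.trace (Sp * Sgm * (Sgm⁻¹ * (a₀ • S) - 1) ^ 2) =
      a₀ ^ 2 * Matrix.trace (Sgm⁻¹ * (H * Matrix.diagonal l * (2 • Ψ + Ψ ^ 2) * Hᵀ)) -
        2 * a₀ * Matrix.trace Ψ := by
  intro S Sp Ψ SigHat
  have hdet : IsUnit (Matrix.diagonal l).det := by
    rw [Matrix.det_diagonal]
    exact isUnit_iff_ne_zero.mpr (Finset.prod_ne_zero_iff.mpr fun i _ => hl i)
  have hDiD : (Matrix.diagonal l)⁻¹ * Matrix.diagonal l = 1 :=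
    Matrix.nonsing_inv_mul _ hdet
  have hSg : Sgm * Sgm⁻¹ = 1 :=
    Matrix.mul_nonsing_inv _ (isUnit_iff_ne_zero.mpr (ne_of_gt hSgm.det_pos))
  have h1 := loss_helper p r H hH (Matrix.diagonal l) (Matrix.diagonal l)⁻¹ hDiD
    Sgm hSg a₀ (1 + Ψ)
  have h2 := loss_helper p r H hH (Matrix.diagonal l) (Matrix.diagonal l)⁻¹ hDiD
    Sgm hSg a₀ 1
  have e1 : SigHat = a₀ • (H * (Matrix.diagonal l * ((1 + Ψ) * Hᵀ))) := by
    simp [SigHat, Matrix.mul_assoc]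
  have e2 : a₀ • S = a₀ • (H * (Matrix.diagonal l * ((1 : Matrix (Fin r) (Fin r) ℝ) * Hᵀ))) := by
    simp [S, Matrix.mul_assoc]
  rw [show Sp = H * (Matrix.diagonal l)⁻¹ * Hᵀ from rfl, e1, e2, h1, h2]
  have hZ : (1 + Ψ) * ((1 + Ψ) * Hᵀ) = Hᵀ + (2 • Ψ + Ψ ^ 2) * Hᵀ := by
    have : (1 + Ψ) * (1 + Ψ) = 1 + (2 • Ψ + Ψ ^ 2) := by
      rw [two_smul]; noncomm_ring
    rw [← Matrix.mul_assoc, this, Matrix.add_mul, Matrix.one_mul]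
  rw [hZ]
  have expand : Matrix.trace (Sgm⁻¹ * (H * (Matrix.diagonal l * (Hᵀ + (2 • Ψ + Ψ ^ 2) * Hᵀ)))) =
      Matrix.trace (Sgm⁻¹ * (H * (Matrix.diagonal l * Hᵀ))) +
        Matrix.trace (Sgm⁻¹ * (H * Matrix.diagonal l * (2 • Ψ + Ψ ^ 2) * Hᵀ)) := by
    rw [Matrix.mul_add, Matrix.mul_add, Matrix.mul_add, Matrix.trace_add]
    congr 2
    simp [Matrix.mul_assoc]
  rw [expand]
  simp only [Matrix.one_mul, Matrix.trace_add, Matrix.trace_one]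
  ring
end

section
/- Let p ≥ r ≥ 1 be integers, let H be a p×r real matrix with HᵀH = I_r, let L = diag(l₁,…,l_r) be an r×r diagonal real matrix with all l_i ≠ 0, and set S = H L Hᵀ and S⁺ = H L⁻¹ Hᵀ. Let Σ be a p×p real positive definite matrix, a₀ a real number, and G an arbitrary p×p real matrix. Then tr(S⁺ Σ (Σ⁻¹ a₀(S + S S⁺ G) − I_p)²) − tr(S⁺ Σ (Σ⁻¹ (a₀ S) − I_p)²) = a₀² tr(Σ⁻¹ S S⁺ G (I_p + S⁺ G + S S⁺)) − 2 a₀ tr(S⁺ G). -/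
open Matrix

private lemma sq_expand {n : ℕ} (a : ℝ) (Y Z : Matrix (Fin n) (Fin n) ℝ) :
    (a • (Y + Z) - 1) ^ 2 - (a • Y - 1) ^ 2 =
      (a ^ 2) • (Y * Z + Z * Y + Z * Z) - (2 * a) • Z := by
  simp only [pow_two, sub_mul, mul_sub, add_mul, mul_add, Matrix.smul_mul, Matrix.mul_smul,
    smul_add, smul_sub, smul_smul, one_mul, mul_one]
  module

/-- Data-based loss difference between the alternative estimator `a₀(S + SS⁺G)` and the
usual estimator `a₀S`:
`tr(S⁺Σ(Σ⁻¹a₀(S+SS⁺G) − I)²) − tr(S⁺Σ(Σ⁻¹(a₀S) − I)²)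
  = a₀² tr(Σ⁻¹ SS⁺G (I + S⁺G + SS⁺)) − 2a₀ tr(S⁺G)`. -/
theorem loss_difference_general_correction
    (p r : ℕ) (hr : 1 ≤ r) (hpr : r ≤ p)
    (H : Matrix (Fin p) (Fin r) ℝ) (hH : Hᵀ * H = 1)
    (l : Fin r → ℝ) (hl : ∀ i, l i ≠ 0)
    (Sgm : Matrix (Fin p) (Fin p) ℝ) (hSgm : Sgm.PosDef)
    (a₀ : ℝ) (G : Matrix (Fin p) (Fin p) ℝ) :
    let S := H * Matrix.diagonal l * Hᵀ
    let Sp := H * (Matrix.diagonal l)⁻¹ * Hᵀ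
    Matrix.trace (Sp * Sgm * (Sgm⁻¹ * (a₀ • (S + S * Sp * G)) - 1) ^ 2) -
        Matrix.trace (Sp * Sgm * (Sgm⁻¹ * (a₀ • S) - 1) ^ 2) =
      a₀ ^ 2 * Matrix.trace (Sgm⁻¹ * (S * Sp * G) * (1 + Sp * G + S * Sp)) -
        2 * a₀ * Matrix.trace (Sp * G) := by
  intro S Sp
  have hdet : (Matrix.diagonal l).det ≠ 0 := by
    rw [Matrix.det_diagonal]
    exact Finset.prod_ne_zero_iff.mpr fun i _ => hl i
  have hd1 : Matrix.diagonal l * (Matrix.diagonal l)⁻¹ = 1 := Matrix.mul_nonsing_inv _ (isUnit_iff_ne_zero.mpr hdet)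
  have hd2 : (Matrix.diagonal l)⁻¹ * Matrix.diagonal l = 1 := Matrix.nonsing_inv_mul _ (isUnit_iff_ne_zero.mpr hdet)
  have hA1 : Sgm * Sgm⁻¹ = 1 := Matrix.mul_nonsing_inv _ (isUnit_iff_ne_zero.mpr hSgm.det_pos.ne')
  have key : ∀ M N : Matrix (Fin r) (Fin r) ℝ, M * N = 1 →
      (H * M * Hᵀ) * (H * N * Hᵀ) = H * Hᵀ := by
    intro M N h
    calc (H * M * Hᵀ) * (H * N * Hᵀ) = H * (M * ((Hᵀ * H) * (N * Hᵀ))) := by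
          simp only [Matrix.mul_assoc]
      _ = H * ((M * N) * Hᵀ) := by rw [hH, Matrix.one_mul, Matrix.mul_assoc]
      _ = H * Hᵀ := by rw [h, Matrix.one_mul]
  have hSSp : S * Sp = H * Hᵀ := key _ _ hd1
  have hSpS : Sp * S = H * Hᵀ := key _ _ hd2
  have key2 : ∀ M : Matrix (Fin r) (Fin r) ℝ,
      (H * Hᵀ) * (H * M * Hᵀ) = H * M * Hᵀ := by
    intro M
    calc (H * Hᵀ) * (H * M * Hᵀ) = H * ((Hᵀ * H) * (M * Hᵀ)) := by simp only [Matrix.mul_assoc]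
      _ = H * M * Hᵀ := by rw [hH, Matrix.one_mul, Matrix.mul_assoc]
  have hPSp : (H * Hᵀ) * Sp = Sp := key2 _
  set K := S * Sp * G with hKdef
  have hSpK : Sp * K = Sp * G := by
    rw [hKdef, ← Matrix.mul_assoc, ← Matrix.mul_assoc, hSpS, hPSp]
  have hSSpK : S * (Sp * K) = K := by
    rw [hSpK, ← Matrix.mul_assoc, hKdef]
  have hcan : ∀ X : Matrix (Fin p) (Fin p) ℝ, Sp * Sgm * (Sgm⁻¹ * X) = Sp * X := by
    intro X
    rw [Matrix.mul_assoc Sp Sgm, ← Matrix.mul_assoc Sgm, hA1, Matrix.one_mul]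
  have hrw1 : Sgm⁻¹ * (a₀ • (S + K)) = a₀ • (Sgm⁻¹ * S + Sgm⁻¹ * K) := by
    rw [Matrix.mul_smul, Matrix.mul_add]
  have hrw2 : Sgm⁻¹ * (a₀ • S) = a₀ • (Sgm⁻¹ * S) := by rw [Matrix.mul_smul]
  have t1 : Matrix.trace (Sp * Sgm * (Sgm⁻¹ * S * (Sgm⁻¹ * K))) =
      Matrix.trace (Sgm⁻¹ * K * (S * Sp)) := by
    rw [Matrix.mul_assoc Sgm⁻¹ S, hcan, ← Matrix.mul_assoc Sp S, hSpS,
      Matrix.trace_mul_comm, ← hSSp]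
  have t2 : Matrix.trace (Sp * Sgm * (Sgm⁻¹ * K * (Sgm⁻¹ * S))) =
      Matrix.trace (Sgm⁻¹ * K) := by
    rw [Matrix.mul_assoc Sgm⁻¹ K, hcan, ← Matrix.mul_assoc Sp K,
      Matrix.trace_mul_comm, Matrix.mul_assoc Sgm⁻¹ S, hSSpK]
  have t3 : Matrix.trace (Sp * Sgm * (Sgm⁻¹ * K * (Sgm⁻¹ * K))) =
      Matrix.trace (Sgm⁻¹ * K * (Sp * G)) := by
    rw [Matrix.mul_assoc Sgm⁻¹ K (Sgm⁻¹ * K), hcan, ← Matrix.mul_assoc Sp K, hSpK,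
      Matrix.trace_mul_comm]
  have t4 : Matrix.trace (Sp * Sgm * (Sgm⁻¹ * K)) = Matrix.trace (Sp * G) := by
    rw [hcan, hSpK]
  rw [hrw1, hrw2, ← Matrix.trace_sub, ← Matrix.mul_sub, sq_expand]
  simp only [Matrix.mul_sub, Matrix.mul_add, Matrix.mul_smul, Matrix.mul_one,
    Matrix.trace_sub, Matrix.trace_add, Matrix.trace_smul, smul_eq_mul]
  rw [t1, t2, t3, t4]
  ring
end

section
/- Let r ≥ 1 be an integer, α ≥ 1 and b > 0 real numbers, and l₁ > l₂ > … > l_r > 0 real numbers. Set T = ∑_{k=1}^r l_k^{−α}. Then ∑_{i=1}^r 4 b α (l_i^{−α}/T)(1 + b l_i^{−α}/T)(l_i^{−α}/T − 1) + (2b/T) ∑_{i=1}^r ∑_{j≠i} (l_i^{1−α} − l_j^{1−α})/(l_i − l_j) + (b²/T²) ∑_{i=1}^r ∑_{j≠i} (l_i^{1−2α} − l_j^{1−2α})/(l_i − l_j) ≤ 0. -/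
open Finset

/-- Nonpositivity of the derivative and cross-difference part `g₂(Ψ)` of the risk-bound
integrand for the Haff-type shrinkage functions `ψ_i = b l_i^{−α}/T`, `T = ∑_k l_k^{−α}`. -/
theorem haff_g2_nonpos
    (r : ℕ) (hr : 1 ≤ r) (α b : ℝ) (hα : 1 ≤ α) (hb : 0 < b)
    (l : Fin r → ℝ) (hpos : ∀ i, 0 < l i) (hanti : StrictAnti l) :
    let T : ℝ := ∑ k : Fin r, l k ^ (-α)
    (∑ i : Fin r, 4 * b * α * (l i ^ (-α) / T) * (1 + b * l i ^ (-α) / T) *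
          (l i ^ (-α) / T - 1)) +
      (2 * b / T) * ∑ i : Fin r, ∑ j ∈ univ.erase i,
          (l i ^ (1 - α) - l j ^ (1 - α)) / (l i - l j) +
      (b ^ 2 / T ^ 2) * ∑ i : Fin r, ∑ j ∈ univ.erase i,
          (l i ^ (1 - 2 * α) - l j ^ (1 - 2 * α)) / (l i - l j) ≤ 0 := by
  intro T
  have hne : (univ : Finset (Fin r)).Nonempty := by
    have : Nonempty (Fin r) := ⟨⟨0, hr⟩⟩
    exact univ_nonempty
  have hT : 0 < T :=
    Finset.sum_pos (fun k _ => Real.rpow_pos_of_pos (hpos k) _) hne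
  -- difference quotients of t ↦ t^c are nonpositive for c ≤ 0
  have key : ∀ (x y c : ℝ), 0 < x → 0 < y → x ≠ y → c ≤ 0 →
      (x ^ c - y ^ c) / (x - y) ≤ 0 := by
    intro x y c hx hy hxy hc
    rcases hxy.lt_or_gt with h | h
    · apply div_nonpos_iff.mpr
      left
      constructor
      · have := Real.rpow_le_rpow_of_nonpos hx h.le hc
        linarith
      · linarith
    · apply div_nonpos_iff.mpr
      right
      constructor
      · have := Real.rpow_le_rpow_of_nonpos hy h.le hc
        linarith
      · linarith
  have hpair : ∀ (c : ℝ), c ≤ 0 →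
      (∑ i : Fin r, ∑ j ∈ univ.erase i, (l i ^ c - l j ^ c) / (l i - l j)) ≤ 0 := by
    intro c hc
    apply Finset.sum_nonpos
    intro i _
    apply Finset.sum_nonpos
    intro j hj
    have hji : j ≠ i := (Finset.mem_erase.mp hj).1
    have hll : l i ≠ l j := fun h => hji.symm (hanti.injective h)
    exact key _ _ _ (hpos i) (hpos j) hll hc
  have h1 : (∑ i : Fin r, 4 * b * α * (l i ^ (-α) / T) * (1 + b * l i ^ (-α) / T) *
      (l i ^ (-α) / T - 1)) ≤ 0 := by
    apply Finset.sum_nonpos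
    intro i _
    have hy0 : 0 ≤ l i ^ (-α) := Real.rpow_nonneg (hpos i).le _
    have hyT : l i ^ (-α) ≤ T :=
      Finset.single_le_sum (f := fun k => l k ^ (-α))
        (fun k _ => Real.rpow_nonneg (hpos k).le _) (Finset.mem_univ i)
    set x : ℝ := l i ^ (-α) / T with hxdef
    have hx0 : 0 ≤ x := div_nonneg hy0 hT.le
    have hx1 : x ≤ 1 := (div_le_one hT).mpr hyT
    have hbx : b * l i ^ (-α) / T = b * x := by
      rw [hxdef, mul_div_assoc]
    rw [hbx]
    have hA : 0 ≤ 4 * b * α * x * (1 + b * x) := by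
      have h1bx : 0 ≤ 1 + b * x := by nlinarith
      have : 0 ≤ 4 * b * α * x := by
        have : (0:ℝ) ≤ α := by linarith
        positivity
      exact mul_nonneg this h1bx
    nlinarith [mul_nonneg hA (by linarith : (0:ℝ) ≤ 1 - x)]
  have h2 : (2 * b / T) * (∑ i : Fin r, ∑ j ∈ univ.erase i,
      (l i ^ (1 - α) - l j ^ (1 - α)) / (l i - l j)) ≤ 0 :=
    mul_nonpos_of_nonneg_of_nonpos (by positivity) (hpair _ (by linarith))
  have h3 : (b ^ 2 / T ^ 2) * (∑ i : Fin r, ∑ j ∈ univ.erase i,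
      (l i ^ (1 - 2 * α) - l j ^ (1 - 2 * α)) / (l i - l j)) ≤ 0 :=
    mul_nonpos_of_nonneg_of_nonpos (by positivity) (hpair _ (by linarith))
  linarith
end

section
/- Let r ≥ 2 and v ≥ r be integers, α ≥ 1 and b > 0 real numbers, and l₁ > l₂ > … > l_r > 0 real numbers. Set T = ∑_{k=1}^r l_k^{−α}, ψ_i = b l_i^{−α}/T, ψ_i' = b α l_i^{−α−1}(l_i^{−α}/T − 1)/T, and define g = ∑_{i=1}^r [ 2(v−r+1)ψ_i + (v−r+1)ψ_i² + 4 l_i (1+ψ_i) ψ_i' + ∑_{j≠i} (l_i(2ψ_i+ψ_i²) − l_j(2ψ_j+ψ_j²))/(l_i − l_j) ] − 2 v b. Then g ≤ −2(r−1)b + (v−r+1)b²; in particular, if b ≤ 2(r−1)/(v−r+1) then g ≤ 0. -/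
open Finset

lemma haff_N_anti (α b T : ℝ) (hα : 1 ≤ α) (hb : 0 ≤ b) (hT : 0 < T)
    {x y : ℝ} (hx : 0 < x) (hxy : x ≤ y) :
    y * (2 * (b * y ^ (-α) / T) + (b * y ^ (-α) / T) ^ 2) ≤
      x * (2 * (b * x ^ (-α) / T) + (b * x ^ (-α) / T) ^ 2) := by
  have hy : 0 < y := lt_of_lt_of_le hx hxy
  have h1 : y ^ (1 - α) ≤ x ^ (1 - α) :=
    Real.rpow_le_rpow_of_nonpos hx hxy (by linarith)
  have h2 : y ^ (1 - 2 * α) ≤ x ^ (1 - 2 * α) :=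
    Real.rpow_le_rpow_of_nonpos hx hxy (by linarith)
  have ex : ∀ z : ℝ, 0 < z →
      z * (2 * (b * z ^ (-α) / T) + (b * z ^ (-α) / T) ^ 2)
        = 2 * (b / T) * z ^ (1 - α) + (b / T) ^ 2 * z ^ (1 - 2 * α) := by
    intro z hz
    have e1 : z ^ (1 - α) = z * z ^ (-α) := by
      rw [show (1 - α) = 1 + (-α) by ring, Real.rpow_add hz, Real.rpow_one]
    have e2 : z ^ (1 - 2 * α) = z * (z ^ (-α) * z ^ (-α)) := by
      rw [show (1 - 2 * α) = 1 + (-α + -α) by ring, Real.rpow_add hz, Real.rpow_one,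
        Real.rpow_add hz]
    rw [e1, e2]; ring
  rw [ex x hx, ex y hy]
  have g1 := mul_le_mul_of_nonneg_left h1 (by positivity : (0:ℝ) ≤ 2 * (b / T))
  have g2 := mul_le_mul_of_nonneg_left h2 (by positivity : (0:ℝ) ≤ (b / T) ^ 2)
  linarith

/-- Upper bound for the risk-bound integrand `g` of the Haff-type estimator with shrinkage
functions `ψ_i = b l_i^{−α}/T`: one has `g ≤ −2(r−1)b + (v−r+1)b²`; in particular `g ≤ 0`
whenever `b ≤ 2(r−1)/(v−r+1)`. -/
theorem haff_integrand_bound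
    (r v : ℕ) (hr : 2 ≤ r) (hv : r ≤ v) (α b : ℝ) (hα : 1 ≤ α) (hb : 0 < b)
    (l : Fin r → ℝ) (hpos : ∀ i, 0 < l i) (hanti : StrictAnti l) :
    let T : ℝ := ∑ k : Fin r, l k ^ (-α)
    let ψ : Fin r → ℝ := fun i => b * l i ^ (-α) / T
    let ψd : Fin r → ℝ := fun i => b * α * l i ^ (-α - 1) * (l i ^ (-α) / T - 1) / T
    let g : ℝ :=
      (∑ i : Fin r,
          (2 * ((v : ℝ) - r + 1) * ψ i + ((v : ℝ) - r + 1) * ψ i ^ 2 +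
            4 * l i * (1 + ψ i) * ψd i +
            ∑ j ∈ univ.erase i,
              (l i * (2 * ψ i + ψ i ^ 2) - l j * (2 * ψ j + ψ j ^ 2)) / (l i - l j))) -
        2 * (v : ℝ) * b
    g ≤ -2 * ((r : ℝ) - 1) * b + ((v : ℝ) - r + 1) * b ^ 2 ∧
      (b ≤ 2 * ((r : ℝ) - 1) / ((v : ℝ) - r + 1) → g ≤ 0) := by
  intro T ψ ψd g
  haveI : Nonempty (Fin r) := ⟨⟨0, by omega⟩⟩
  have hrv : (r : ℝ) ≤ (v : ℝ) := Nat.cast_le.mpr hv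
  have hc : (1 : ℝ) ≤ (v : ℝ) - r + 1 := by linarith
  have hTpos : 0 < T :=
    Finset.sum_pos (fun k _ => Real.rpow_pos_of_pos (hpos k) _) univ_nonempty
  have hle : ∀ i : Fin r, l i ^ (-α) ≤ T := fun i =>
    Finset.single_le_sum (f := fun k => l k ^ (-α))
      (fun k _ => (Real.rpow_pos_of_pos (hpos k) _).le) (mem_univ i)
  have hψ0 : ∀ i, 0 ≤ ψ i := fun i =>
    div_nonneg (mul_nonneg hb.le (Real.rpow_pos_of_pos (hpos i) _).le) hTpos.le
  have hψle : ∀ i, ψ i ≤ b := by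
    intro i
    show b * l i ^ (-α) / T ≤ b
    rw [div_le_iff₀ hTpos]
    calc b * l i ^ (-α) ≤ b * T := mul_le_mul_of_nonneg_left (hle i) hb.le
      _ = b * T := rfl
  have hψsum : ∑ i, ψ i = b := by
    show ∑ i : Fin r, b * l i ^ (-α) / T = b
    rw [← Finset.sum_div, ← Finset.mul_sum]
    exact mul_div_cancel_right₀ b hTpos.ne'
  have hψsq : ∑ i, ψ i ^ 2 ≤ b ^ 2 := by
    calc ∑ i, ψ i ^ 2 ≤ ∑ i, b * ψ i := by
          refine Finset.sum_le_sum fun i _ => ?_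
          have h1 := hψle i; have h2 := hψ0 i
          nlinarith
      _ = b * ∑ i, ψ i := by rw [Finset.mul_sum]
      _ = b ^ 2 := by rw [hψsum]; ring
  have hψd : ∀ i, ψd i ≤ 0 := by
    intro i
    show b * α * l i ^ (-α - 1) * (l i ^ (-α) / T - 1) / T ≤ 0
    apply div_nonpos_of_nonpos_of_nonneg _ hTpos.le
    apply mul_nonpos_of_nonneg_of_nonpos
    · have := (hpos i); positivity
    · exact sub_nonpos.mpr ((div_le_one hTpos).mpr (hle i))
  have hCterm : ∀ i, 4 * l i * (1 + ψ i) * ψd i ≤ 0 := by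
    intro i
    apply mul_nonpos_of_nonneg_of_nonpos _ (hψd i)
    have h1 := (hpos i).le; have h2 := hψ0 i
    nlinarith
  have key : ∀ a a' : Fin r, l a' < l a →
      l a * (2 * ψ a + ψ a ^ 2) ≤ l a' * (2 * ψ a' + ψ a' ^ 2) := by
    intro a a' hab
    exact haff_N_anti α b T hα hb.le hTpos (hpos a') hab.le
  have hDterm : ∀ i j : Fin r, j ≠ i →
      (l i * (2 * ψ i + ψ i ^ 2) - l j * (2 * ψ j + ψ j ^ 2)) / (l i - l j) ≤ 0 := by
    intro i j hne
    rcases lt_or_gt_of_ne (fun h : i = j => hne h.symm) with hij | hij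
    · have hlt := hanti hij
      have hnum := key i j hlt
      exact div_nonpos_of_nonpos_of_nonneg (by linarith) (by linarith)
    · have hlt := hanti hij
      have hnum := key j i hlt
      exact div_nonpos_of_nonneg_of_nonpos (by linarith) (by linarith)
  have hDsum : ∀ i : Fin r, (∑ j ∈ univ.erase i,
      (l i * (2 * ψ i + ψ i ^ 2) - l j * (2 * ψ j + ψ j ^ 2)) / (l i - l j)) ≤ 0 := by
    intro i
    exact Finset.sum_nonpos fun j hj => hDterm i j (Finset.ne_of_mem_erase hj)
  have hmain : g ≤ -2 * ((r : ℝ) - 1) * b + ((v : ℝ) - r + 1) * b ^ 2 := by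
    have hstep : g ≤ (∑ i : Fin r,
        (2 * ((v : ℝ) - r + 1) * ψ i + ((v : ℝ) - r + 1) * ψ i ^ 2)) - 2 * (v : ℝ) * b := by
      show (∑ i : Fin r,
          (2 * ((v : ℝ) - r + 1) * ψ i + ((v : ℝ) - r + 1) * ψ i ^ 2 +
            4 * l i * (1 + ψ i) * ψd i +
            ∑ j ∈ univ.erase i,
              (l i * (2 * ψ i + ψ i ^ 2) - l j * (2 * ψ j + ψ j ^ 2)) / (l i - l j))) -
          2 * (v : ℝ) * b ≤ _
      apply sub_le_sub_right
      refine Finset.sum_le_sum fun i _ => ?_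
      have h1 := hCterm i; have h2 := hDsum i
      linarith
    have hsum : (∑ i : Fin r,
        (2 * ((v : ℝ) - r + 1) * ψ i + ((v : ℝ) - r + 1) * ψ i ^ 2))
        = 2 * ((v : ℝ) - r + 1) * (∑ i, ψ i) + ((v : ℝ) - r + 1) * (∑ i, ψ i ^ 2) := by
      rw [Finset.sum_add_distrib, ← Finset.mul_sum, ← Finset.mul_sum]
    rw [hsum, hψsum] at hstep
    have hsq : ((v : ℝ) - r + 1) * (∑ i, ψ i ^ 2) ≤ ((v : ℝ) - r + 1) * b ^ 2 :=
      mul_le_mul_of_nonneg_left hψsq (by linarith)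
    calc g ≤ 2 * ((v : ℝ) - r + 1) * b + ((v : ℝ) - r + 1) * (∑ i, ψ i ^ 2)
        - 2 * (v : ℝ) * b := hstep
      _ ≤ 2 * ((v : ℝ) - r + 1) * b + ((v : ℝ) - r + 1) * b ^ 2 - 2 * (v : ℝ) * b := by
          linarith
      _ = -2 * ((r : ℝ) - 1) * b + ((v : ℝ) - r + 1) * b ^ 2 := by ring
  refine ⟨hmain, fun hb2 => ?_⟩
  have hc0 : (0 : ℝ) < (v : ℝ) - r + 1 := by linarith
  have hbc : b * ((v : ℝ) - r + 1) ≤ 2 * ((r : ℝ) - 1) := by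
    rwa [le_div_iff₀ hc0] at hb2
  nlinarith [mul_le_mul_of_nonneg_right hbc hb.le]
end

section
/- Let q, m, p ≥ 1 be integers, n = q + m, r = min{p, m}, v = max{p, m}, and let Σ be a p×p real positive definite matrix and θ a q×p real matrix. Let f : ℝ → [0,∞) be measurable, let μ be the probability measure on pairs (z, u) of q×p and m×p real matrices with density (z,u) ↦ (det Σ)^{−n/2} f(tr((z−θ)Σ⁻¹(z−θ)ᵀ) + tr(uΣ⁻¹uᵀ)) with respect to Lebesgue measure, let F*(t) = (1/2)∫_t^∞ f(ν)dν, let K* = ∫ (det Σ)^{−n/2} F*(tr((z−θ)Σ⁻¹(z−θ)ᵀ) + tr(uΣ⁻¹uᵀ)) dz du be finite and positive, let μ* be the probability measure with density (det Σ)^{−n/2} F*(·)/K*, and set a₀ = 1/(K* v). Suppose H(u) is a measurable p×r-matrix-valued function and l(u) = (l₁(u),…,l_r(u)) a measurable function such that for μ- and μ*-almost every (z,u): H(u)ᵀH(u) = I_r, l₁(u) > … > l_r(u) > 0, and uᵀu = H(u) diag(l(u)) H(u)ᵀ; set S = uᵀu, S⁺ = H(u) diag(l(u))⁻¹ H(u)ᵀ.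 Let ψ₁,…,ψ_r be differentiable real functions of l = (l₁,…,l_r) with ∑_{i=1}^r ψ_i(l) ≥ λ for a fixed λ > 0, let Ψ = diag(ψ₁,…,ψ_r), φ_i = 2ψ_i + ψ_i², and define the estimators Σ̂_Ψ(u) = a₀ H diag(l)(I_r + Ψ) Hᵀ and Σ̂_{a₀}(u) = a₀ S. Assume all the loss integrals below are finite and that the Stein–Haff identity ∫ tr(Σ⁻¹ H diag(l₁φ₁,…,l_rφ_r) Hᵀ) dμ = K* ∫ ∑_{i=1}^r [ (v−r+1)φ_i + 2 l_i ∂φ_i/∂l_i + ∑_{j≠i} (l_i φ_i − l_j φ_j)/(l_i − l_j) ] dμ* holds. Then ∫ tr(S⁺Σ(Σ⁻¹Σ̂_Ψ − I_p)²) dμ − ∫ tr(S⁺Σ(Σ⁻¹Σ̂_{a₀} − I_p)²) dμ ≤ a₀² K* ∫ ( ∑_{i=1}^r [ 2(v−r+1)ψ_i + (v−r+1)ψ_i² + 4 l_i (1+ψ_i) ∂ψ_i/∂l_i + ∑_{j≠i} (l_i(2ψ_i+ψ_i²) − l_j(2ψ_j+ψ_j²))/(l_i − l_j) ] − 2 v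 λ ) dμ*. -/
open Matrix MeasureTheory Real Set Finset

noncomputable instance (n p : ℕ) : MeasureSpace (Matrix (Fin n) (Fin p) ℝ) :=
  (inferInstance : MeasureSpace (Fin n → Fin p → ℝ))

/-- Elliptical density kernel `(z,u) ↦ (det Σ)^(−n/2) g(tr((z−θ)Σ⁻¹(z−θ)ᵀ) + tr(uΣ⁻¹uᵀ))`. -/
noncomputable def ellKernel (q m p n : ℕ) (Sgm : Matrix (Fin p) (Fin p) ℝ)
    (θ : Matrix (Fin q) (Fin p) ℝ) (g : ℝ → ℝ)
    (zu : Matrix (Fin q) (Fin p) ℝ × Matrix (Fin m) (Fin p) ℝ) : ℝ :=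
  Sgm.det ^ (-(n : ℝ) / 2) *
    g (Matrix.trace ((zu.1 - θ) * Sgm⁻¹ * (zu.1 - θ)ᵀ) +
       Matrix.trace (zu.2 * Sgm⁻¹ * zu.2ᵀ))

/-- The data-based loss `L_S(Σ̂, Σ) = tr(S⁺ Σ (Σ⁻¹ Σ̂ − I_p)²)`. -/
noncomputable def dbLoss (p : ℕ) (Sgm Sp Shat : Matrix (Fin p) (Fin p) ℝ) : ℝ :=
  Matrix.trace (Sp * Sgm * (Sgm⁻¹ * Shat - 1) ^ 2)

lemma trace_expand {p : ℕ} (Sgm P A : Matrix (Fin p) (Fin p) ℝ) (h1 : Sgm * Sgm⁻¹ = 1) :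
    Matrix.trace (P * Sgm * (Sgm⁻¹ * A - 1) ^ 2) =
      Matrix.trace (P * (A * (Sgm⁻¹ * A))) - 2 * Matrix.trace (P * A) + Matrix.trace (P * Sgm) := by
  have key : P * Sgm * (Sgm⁻¹ * A - 1) ^ 2 =
      P * (Sgm * Sgm⁻¹) * (A * (Sgm⁻¹ * A)) -
        (P * (Sgm * Sgm⁻¹) * A + P * (Sgm * Sgm⁻¹) * A) + P * Sgm := by
    noncomm_ring
  rw [key, h1, Matrix.mul_one, Matrix.trace_add, Matrix.trace_sub, Matrix.trace_add]
  ring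

lemma traceT2 {p r : ℕ} (Hm : Matrix (Fin p) (Fin r) ℝ) (hH : Hmᵀ * Hm = 1)
    (c d : Fin r → ℝ) :
    Matrix.trace (Hm * Matrix.diagonal c * Hmᵀ * (Hm * Matrix.diagonal d * Hmᵀ)) =
      ∑ i, c i * d i := by
  have hcancel : ∀ (k : ℕ) (X : Matrix (Fin r) (Fin k) ℝ), Hmᵀ * (Hm * X) = X := fun k X => by
    rw [← Matrix.mul_assoc, hH, Matrix.one_mul]
  simp only [Matrix.mul_assoc]
  rw [hcancel]
  rw [Matrix.trace_mul_comm]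
  simp only [Matrix.mul_assoc]
  rw [hH, Matrix.mul_one, Matrix.diagonal_mul_diagonal, Matrix.trace_diagonal]

lemma traceT1 {p r : ℕ} (Hm : Matrix (Fin p) (Fin r) ℝ) (hH : Hmᵀ * Hm = 1)
    (Sgi : Matrix (Fin p) (Fin p) ℝ) (c d e : Fin r → ℝ) :
    Matrix.trace (Hm * Matrix.diagonal c * Hmᵀ *
        (Hm * Matrix.diagonal d * Hmᵀ * (Sgi * (Hm * Matrix.diagonal e * Hmᵀ)))) =
      Matrix.trace (Sgi * (Hm * Matrix.diagonal (fun i => e i * c i * d i) * Hmᵀ)) := by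
  have hcancel : ∀ (k : ℕ) (X : Matrix (Fin r) (Fin k) ℝ), Hmᵀ * (Hm * X) = X := fun k X => by
    rw [← Matrix.mul_assoc, hH, Matrix.one_mul]
  simp only [Matrix.mul_assoc]
  rw [hcancel]
  rw [Matrix.trace_mul_comm]
  simp only [Matrix.mul_assoc]
  rw [hH, Matrix.mul_one]
  rw [Matrix.trace_mul_comm]
  simp only [Matrix.mul_assoc, Matrix.diagonal_mul_diagonal]
  rw [Matrix.trace_mul_comm]
  simp only [Matrix.mul_assoc, Matrix.diagonal_mul_diagonal]
  rw [Matrix.trace_mul_comm]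
  simp only [Matrix.mul_assoc]

lemma loss_diff {p r : ℕ} (Sgm : Matrix (Fin p) (Fin p) ℝ) (h1 : Sgm * Sgm⁻¹ = 1)
    (Hm : Matrix (Fin p) (Fin r) ℝ) (hH : Hmᵀ * Hm = 1)
    (l : Fin r → ℝ) (hl : ∀ i, 0 < l i) (ψv : Fin r → ℝ) (a₀ : ℝ) :
    dbLoss p Sgm (Hm * (Matrix.diagonal l)⁻¹ * Hmᵀ)
        (a₀ • (Hm * Matrix.diagonal l * (1 + Matrix.diagonal ψv) * Hmᵀ)) -
      dbLoss p Sgm (Hm * (Matrix.diagonal l)⁻¹ * Hmᵀ)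
        (a₀ • (Hm * Matrix.diagonal l * Hmᵀ)) =
    a₀ ^ 2 * Matrix.trace (Sgm⁻¹ *
        (Hm * Matrix.diagonal (fun i => l i * (2 * ψv i + ψv i ^ 2)) * Hmᵀ)) -
      2 * a₀ * ∑ i, ψv i := by
  have hl0 : ∀ i, l i ≠ 0 := fun i => (hl i).ne'
  have hDi : (Matrix.diagonal l)⁻¹ = Matrix.diagonal (fun i => (l i)⁻¹) := by
    refine Matrix.inv_eq_left_inv ?_
    rw [Matrix.diagonal_mul_diagonal]
    convert Matrix.diagonal_one with i
    exact inv_mul_cancel₀ (hl0 i)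
  have hMΨ : Hm * Matrix.diagonal l * (1 + Matrix.diagonal ψv) * Hmᵀ =
      Hm * Matrix.diagonal (fun i => l i * (1 + ψv i)) * Hmᵀ := by
    rw [← Matrix.diagonal_one, Matrix.diagonal_add, Matrix.mul_assoc Hm,
      Matrix.diagonal_mul_diagonal]
  rw [dbLoss, dbLoss, hMΨ, hDi, trace_expand Sgm _ _ h1, trace_expand Sgm _ _ h1]
  simp only [Matrix.smul_mul, Matrix.mul_smul, smul_smul, Matrix.trace_smul, smul_eq_mul]
  rw [traceT1 Hm hH, traceT1 Hm hH, traceT2 Hm hH, traceT2 Hm hH]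
  have hf : (fun i => l i * (1 + ψv i) * (l i)⁻¹ * (l i * (1 + ψv i))) =
      fun i => l i * (2 * ψv i + ψv i ^ 2) + l i * (l i)⁻¹ * l i := by
    funext i
    have h := hl0 i
    field_simp
    ring
  have hsplit : Matrix.trace (Sgm⁻¹ * (Hm *
        Matrix.diagonal (fun i => l i * (1 + ψv i) * (l i)⁻¹ * (l i * (1 + ψv i))) * Hmᵀ)) =
      Matrix.trace (Sgm⁻¹ *
        (Hm * Matrix.diagonal (fun i => l i * (2 * ψv i + ψv i ^ 2)) * Hmᵀ)) +
      Matrix.trace (Sgm⁻¹ * (Hm * Matrix.diagonal (fun i => l i * (l i)⁻¹ * l i) * Hmᵀ)) := by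
    rw [hf, ← Matrix.diagonal_add, Matrix.mul_add Hm, Matrix.add_mul, Matrix.mul_add,
      Matrix.trace_add]

  have hs1 : ∑ i : Fin r, (l i)⁻¹ * (l i * (1 + ψv i)) = (r : ℝ) + ∑ i, ψv i := by
    have h : ∀ i : Fin r, (l i)⁻¹ * (l i * (1 + ψv i)) = 1 + ψv i := fun i => by
      rw [← mul_assoc, inv_mul_cancel₀ (hl0 i), one_mul]
    simp only [h]
    rw [Finset.sum_add_distrib, Finset.sum_const, Finset.card_univ, Fintype.card_fin,
      nsmul_eq_mul, mul_one]
  have hs0 : ∑ i : Fin r, (l i)⁻¹ * l i = (r : ℝ) := by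
    have h : ∀ i : Fin r, (l i)⁻¹ * l i = 1 := fun i => inv_mul_cancel₀ (hl0 i)
    simp only [h]
    rw [Finset.sum_const, Finset.card_univ, Fintype.card_fin, nsmul_eq_mul, mul_one]
  rw [hsplit, hs1, hs0]
  ring

set_option maxHeartbeats 2000000 in
/-- Dominance theorem: under the Stein–Haff type identity, the risk difference (under the
data-based loss) between the orthogonally invariant estimator `Σ̂_Ψ = a₀ H L (I_r + Ψ) Hᵀ`
and the optimal usual estimator `Σ̂_{a₀} = a₀ S`, `a₀ = 1/(K* v)`, is bounded above by
`a₀² K* ∫ g(Ψ) dμ*` where `g(Ψ)` is the displayed integrand. -/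
theorem dominance_orthogonally_invariant
    (q m p r v n : ℕ) (hq : 1 ≤ q) (hm : 1 ≤ m) (hp : 1 ≤ p)
    (hn : n = q + m) (hr : r = min p m) (hv : v = max p m)
    (Sgm : Matrix (Fin p) (Fin p) ℝ) (hSgm : Sgm.PosDef)
    (θ : Matrix (Fin q) (Fin p) ℝ)
    (f : ℝ → ℝ) (hfmeas : Measurable f) (hf0 : ∀ t, 0 ≤ f t)
    (μ : Measure (Matrix (Fin q) (Fin p) ℝ × Matrix (Fin m) (Fin p) ℝ))
    (hμ : μ = volume.withDensity fun zu => ENNReal.ofReal (ellKernel q m p n Sgm θ f zu))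
    (hμprob : IsProbabilityMeasure μ)
    (Fstar : ℝ → ℝ) (hFstar : ∀ t, Fstar t = (1 / 2) * ∫ ν in Ioi t, f ν)
    (Kstar : ℝ) (hKpos : 0 < Kstar)
    (hKint : Integrable (fun zu => ellKernel q m p n Sgm θ Fstar zu) volume)
    (hKdef : Kstar = ∫ zu, ellKernel q m p n Sgm θ Fstar zu)
    (μstar : Measure (Matrix (Fin q) (Fin p) ℝ × Matrix (Fin m) (Fin p) ℝ))
    (hμstar : μstar = volume.withDensity fun zu =>
      ENNReal.ofReal (ellKernel q m p n Sgm θ Fstar zu / Kstar))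
    (a₀ : ℝ) (ha₀ : a₀ = 1 / (Kstar * v))
    -- measurable spectral decomposition `uᵀu = H(u) diag(l(u)) H(u)ᵀ`
    (H : Matrix (Fin m) (Fin p) ℝ → Matrix (Fin p) (Fin r) ℝ) (hHmeas : Measurable H)
    (lf : Matrix (Fin m) (Fin p) ℝ → Fin r → ℝ) (hlfmeas : Measurable lf)
    (hspec : ∀ᵐ zu ∂μ, (H zu.2)ᵀ * H zu.2 = 1 ∧ StrictAnti (lf zu.2) ∧
      (∀ i, 0 < lf zu.2 i) ∧
      zu.2ᵀ * zu.2 = H zu.2 * Matrix.diagonal (lf zu.2) * (H zu.2)ᵀ)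
    (hspecstar : ∀ᵐ zu ∂μstar, (H zu.2)ᵀ * H zu.2 = 1 ∧ StrictAnti (lf zu.2) ∧
      (∀ i, 0 < lf zu.2 i) ∧
      zu.2ᵀ * zu.2 = H zu.2 * Matrix.diagonal (lf zu.2) * (H zu.2)ᵀ)
    -- differentiable shrinkage functions with `tr Ψ ≥ λ > 0`
    (lam : ℝ) (hlam : 0 < lam)
    (ψ : Fin r → (Fin r → ℝ) → ℝ) (hψdiff : ∀ i, Differentiable ℝ (ψ i))
    (hψlam : ∀ x : Fin r → ℝ, StrictAnti x → (∀ i, 0 < x i) → lam ≤ ∑ i, ψ i x)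
    -- partial derivatives `ψd i = ∂ψ_i/∂l_i` and `φd i = ∂φ_i/∂l_i` for `φ_i = 2ψ_i + ψ_i²`
    (ψd : Fin r → (Fin r → ℝ) → ℝ)
    (hψd : ∀ i (x : Fin r → ℝ),
      HasDerivAt (fun t => ψ i (Function.update x i t)) (ψd i x) (x i))
    (φd : Fin r → (Fin r → ℝ) → ℝ)
    (hφd : ∀ i (x : Fin r → ℝ),
      HasDerivAt (fun t => 2 * ψ i (Function.update x i t) +
        ψ i (Function.update x i t) ^ 2) (φd i x) (x i))
    -- the two estimators and the Moore–Penrose inverse of S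
    (Sp ShatPsi Shat₀ : Matrix (Fin q) (Fin p) ℝ × Matrix (Fin m) (Fin p) ℝ →
      Matrix (Fin p) (Fin p) ℝ)
    (hSp : ∀ zu, Sp zu = H zu.2 * (Matrix.diagonal (lf zu.2))⁻¹ * (H zu.2)ᵀ)
    (hShatPsi : ∀ zu, ShatPsi zu = a₀ •
      (H zu.2 * Matrix.diagonal (lf zu.2) *
        (1 + Matrix.diagonal fun i => ψ i (lf zu.2)) * (H zu.2)ᵀ))
    (hShat₀ : ∀ zu, Shat₀ zu = a₀ • (zu.2ᵀ * zu.2))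
    -- finiteness of the loss integrals and of the integrands below
    (hint₁ : Integrable (fun zu => dbLoss p Sgm (Sp zu) (ShatPsi zu)) μ)
    (hint₂ : Integrable (fun zu => dbLoss p Sgm (Sp zu) (Shat₀ zu)) μ)
    (hint₃ : Integrable (fun zu => Matrix.trace (Sgm⁻¹ *
      (H zu.2 * Matrix.diagonal
        (fun i => lf zu.2 i * (2 * ψ i (lf zu.2) + ψ i (lf zu.2) ^ 2)) * (H zu.2)ᵀ))) μ)
    (hint₄ : Integrable (fun zu => ∑ i : Fin r,
      (((v : ℝ) - r + 1) * (2 * ψ i (lf zu.2) + ψ i (lf zu.2) ^ 2) +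
        2 * lf zu.2 i * φd i (lf zu.2) +
        ∑ j ∈ univ.erase i,
          (lf zu.2 i * (2 * ψ i (lf zu.2) + ψ i (lf zu.2) ^ 2) -
            lf zu.2 j * (2 * ψ j (lf zu.2) + ψ j (lf zu.2) ^ 2)) /
            (lf zu.2 i - lf zu.2 j))) μstar)
    (hint₅ : Integrable (fun zu => (∑ i : Fin r,
      (2 * ((v : ℝ) - r + 1) * ψ i (lf zu.2) + ((v : ℝ) - r + 1) * ψ i (lf zu.2) ^ 2 +
        4 * lf zu.2 i * (1 + ψ i (lf zu.2)) * ψd i (lf zu.2) +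
        ∑ j ∈ univ.erase i,
          (lf zu.2 i * (2 * ψ i (lf zu.2) + ψ i (lf zu.2) ^ 2) -
            lf zu.2 j * (2 * ψ j (lf zu.2) + ψ j (lf zu.2) ^ 2)) /
            (lf zu.2 i - lf zu.2 j))) - 2 * (v : ℝ) * lam) μstar)
    -- the Stein–Haff type identity for `φ_i = 2ψ_i + ψ_i²`
    (hSH : (∫ zu, Matrix.trace (Sgm⁻¹ *
        (H zu.2 * Matrix.diagonal
          (fun i => lf zu.2 i * (2 * ψ i (lf zu.2) + ψ i (lf zu.2) ^ 2)) * (H zu.2)ᵀ)) ∂μ) =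
      Kstar * ∫ zu, (∑ i : Fin r,
        (((v : ℝ) - r + 1) * (2 * ψ i (lf zu.2) + ψ i (lf zu.2) ^ 2) +
          2 * lf zu.2 i * φd i (lf zu.2) +
          ∑ j ∈ univ.erase i,
            (lf zu.2 i * (2 * ψ i (lf zu.2) + ψ i (lf zu.2) ^ 2) -
              lf zu.2 j * (2 * ψ j (lf zu.2) + ψ j (lf zu.2) ^ 2)) /
              (lf zu.2 i - lf zu.2 j))) ∂μstar) :
    (∫ zu, dbLoss p Sgm (Sp zu) (ShatPsi zu) ∂μ) -
        (∫ zu, dbLoss p Sgm (Sp zu) (Shat₀ zu) ∂μ) ≤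
      a₀ ^ 2 * Kstar * ∫ zu, ((∑ i : Fin r,
        (2 * ((v : ℝ) - r + 1) * ψ i (lf zu.2) + ((v : ℝ) - r + 1) * ψ i (lf zu.2) ^ 2 +
          4 * lf zu.2 i * (1 + ψ i (lf zu.2)) * ψd i (lf zu.2) +
          ∑ j ∈ univ.erase i,
            (lf zu.2 i * (2 * ψ i (lf zu.2) + ψ i (lf zu.2) ^ 2) -
              lf zu.2 j * (2 * ψ j (lf zu.2) + ψ j (lf zu.2) ^ 2)) /
              (lf zu.2 i - lf zu.2 j))) - 2 * (v : ℝ) * lam) ∂μstar := by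

  haveI := hμprob
  have hv1 : 1 ≤ v := hv ▸ le_trans hp (le_max_left p m)
  have hv0 : (0:ℝ) < (v:ℝ) := by exact_mod_cast Nat.lt_of_lt_of_le Nat.zero_lt_one hv1
  have ha₀pos : 0 < a₀ := by rw [ha₀]; positivity
  have hKv : a₀ * (Kstar * (v:ℝ)) = 1 := by
    rw [ha₀, one_div]
    exact inv_mul_cancel₀ (by positivity)
  have hdet1 : Sgm * Sgm⁻¹ = 1 :=
    Matrix.mul_nonsing_inv _ (isUnit_iff_ne_zero.mpr hSgm.det_pos.ne')
  -- pointwise loss difference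
  have hae : ∀ᵐ zu ∂μ, dbLoss p Sgm (Sp zu) (ShatPsi zu) - dbLoss p Sgm (Sp zu) (Shat₀ zu) =
      a₀ ^ 2 * Matrix.trace (Sgm⁻¹ * (H zu.2 * Matrix.diagonal
        (fun i => lf zu.2 i * (2 * ψ i (lf zu.2) + ψ i (lf zu.2) ^ 2)) * (H zu.2)ᵀ)) -
      2 * a₀ * ∑ i, ψ i (lf zu.2) := by
    filter_upwards [hspec] with zu h
    obtain ⟨h1, h2, h3, h4⟩ := h
    rw [hSp, hShatPsi, hShat₀, h4]
    exact loss_diff Sgm hdet1 (H zu.2) h1 (lf zu.2) h3 (fun i => ψ i (lf zu.2)) a₀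
  -- integrability of the trace-Ψ term
  have hg2int : Integrable (fun zu => ∑ i, ψ i (lf zu.2)) μ := by
    have hd := hint₁.sub hint₂
    refine (((hint₃.const_mul (a₀ ^ 2)).sub hd).const_mul (1 / (2 * a₀))).congr ?_
    filter_upwards [hae] with zu h
    simp only [Pi.sub_apply]
    rw [h]
    field_simp
    ring
  -- risk difference formula
  have hLHS : (∫ zu, dbLoss p Sgm (Sp zu) (ShatPsi zu) ∂μ) -
      (∫ zu, dbLoss p Sgm (Sp zu) (Shat₀ zu) ∂μ) =
      a₀ ^ 2 * (∫ zu, Matrix.trace (Sgm⁻¹ * (H zu.2 * Matrix.diagonal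
        (fun i => lf zu.2 i * (2 * ψ i (lf zu.2) + ψ i (lf zu.2) ^ 2)) * (H zu.2)ᵀ)) ∂μ) -
      2 * a₀ * ∫ zu, (∑ i, ψ i (lf zu.2)) ∂μ := by
    rw [← integral_sub hint₁ hint₂, integral_congr_ae hae,
      integral_sub (hint₃.const_mul (a₀ ^ 2)) (hg2int.const_mul (2 * a₀)),
      integral_const_mul, integral_const_mul]
  -- μ* is a probability measure
  have hFnn : ∀ t, 0 ≤ Fstar t := fun t => by
    rw [hFstar]
    exact mul_nonneg (by norm_num) (setIntegral_nonneg measurableSet_Ioi fun x _ => hf0 x)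
  have hkernn : ∀ zu, 0 ≤ ellKernel q m p n Sgm θ Fstar zu := fun zu =>
    mul_nonneg (Real.rpow_nonneg hSgm.det_pos.le _) (hFnn _)
  haveI hμstarprob : IsProbabilityMeasure μstar := by
    constructor
    rw [hμstar, withDensity_apply _ MeasurableSet.univ, Measure.restrict_univ]
    rw [← MeasureTheory.ofReal_integral_eq_lintegral_ofReal (hKint.div_const Kstar)
      (Filter.Eventually.of_forall fun zu => div_nonneg (hkernn zu) hKpos.le)]
    rw [integral_div, ← hKdef, div_self hKpos.ne']
    exact ENNReal.ofReal_one
  -- trace Ψ ≥ λ in mean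
  have h2lam : lam ≤ ∫ zu, (∑ i, ψ i (lf zu.2)) ∂μ := by
    have hm := integral_mono_ae (integrable_const lam) hg2int
      (hspec.mono fun zu h => hψlam _ h.2.1 h.2.2.1)
    simpa [integral_const, measure_univ] using hm
  -- φ' = 2(1+ψ)ψ'
  have hφdeq : ∀ i (x : Fin r → ℝ), φd i x = 2 * ψd i x + 2 * ψ i x * ψd i x := by
    intro i x
    have hb := hψd i x
    have h3 := (hφd i x).unique ((hb.const_mul 2).add (hb.pow 2))
    rw [h3, Function.update_eq_self]
    push_cast
    ring
  -- the two μ*-integrands agree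
  have hsumeq : ∀ zu : Matrix (Fin q) (Fin p) ℝ × Matrix (Fin m) (Fin p) ℝ,
      (∑ i : Fin r,
        (((v : ℝ) - r + 1) * (2 * ψ i (lf zu.2) + ψ i (lf zu.2) ^ 2) +
          2 * lf zu.2 i * φd i (lf zu.2) +
          ∑ j ∈ univ.erase i,
            (lf zu.2 i * (2 * ψ i (lf zu.2) + ψ i (lf zu.2) ^ 2) -
              lf zu.2 j * (2 * ψ j (lf zu.2) + ψ j (lf zu.2) ^ 2)) /
              (lf zu.2 i - lf zu.2 j))) =
      (∑ i : Fin r,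
        (2 * ((v : ℝ) - r + 1) * ψ i (lf zu.2) + ((v : ℝ) - r + 1) * ψ i (lf zu.2) ^ 2 +
          4 * lf zu.2 i * (1 + ψ i (lf zu.2)) * ψd i (lf zu.2) +
          ∑ j ∈ univ.erase i,
            (lf zu.2 i * (2 * ψ i (lf zu.2) + ψ i (lf zu.2) ^ 2) -
              lf zu.2 j * (2 * ψ j (lf zu.2) + ψ j (lf zu.2) ^ 2)) /
              (lf zu.2 i - lf zu.2 j))) := fun zu =>
    Finset.sum_congr rfl fun i _ => by rw [hφdeq]; ring
  have hint₄' : Integrable (fun zu => ∑ i : Fin r,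
      (2 * ((v : ℝ) - r + 1) * ψ i (lf zu.2) + ((v : ℝ) - r + 1) * ψ i (lf zu.2) ^ 2 +
        4 * lf zu.2 i * (1 + ψ i (lf zu.2)) * ψd i (lf zu.2) +
        ∑ j ∈ univ.erase i,
          (lf zu.2 i * (2 * ψ i (lf zu.2) + ψ i (lf zu.2) ^ 2) -
            lf zu.2 j * (2 * ψ j (lf zu.2) + ψ j (lf zu.2) ^ 2)) /
            (lf zu.2 i - lf zu.2 j))) μstar :=
    hint₄.congr (Filter.Eventually.of_forall hsumeq)
  have hSH' : (∫ zu, Matrix.trace (Sgm⁻¹ * (H zu.2 * Matrix.diagonal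
        (fun i => lf zu.2 i * (2 * ψ i (lf zu.2) + ψ i (lf zu.2) ^ 2)) * (H zu.2)ᵀ)) ∂μ) =
      Kstar * ∫ zu, (∑ i : Fin r,
        (2 * ((v : ℝ) - r + 1) * ψ i (lf zu.2) + ((v : ℝ) - r + 1) * ψ i (lf zu.2) ^ 2 +
          4 * lf zu.2 i * (1 + ψ i (lf zu.2)) * ψd i (lf zu.2) +
          ∑ j ∈ univ.erase i,
            (lf zu.2 i * (2 * ψ i (lf zu.2) + ψ i (lf zu.2) ^ 2) -
              lf zu.2 j * (2 * ψ j (lf zu.2) + ψ j (lf zu.2) ^ 2)) /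
              (lf zu.2 i - lf zu.2 j))) ∂μstar := by
    rw [hSH]
    exact congrArg (Kstar * ·) (integral_congr_ae (Filter.Eventually.of_forall hsumeq))
  have hRHSint : (∫ zu, ((∑ i : Fin r,
      (2 * ((v : ℝ) - r + 1) * ψ i (lf zu.2) + ((v : ℝ) - r + 1) * ψ i (lf zu.2) ^ 2 +
        4 * lf zu.2 i * (1 + ψ i (lf zu.2)) * ψd i (lf zu.2) +
        ∑ j ∈ univ.erase i,
          (lf zu.2 i * (2 * ψ i (lf zu.2) + ψ i (lf zu.2) ^ 2) -
            lf zu.2 j * (2 * ψ j (lf zu.2) + ψ j (lf zu.2) ^ 2)) /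
            (lf zu.2 i - lf zu.2 j))) - 2 * (v : ℝ) * lam) ∂μstar) =
      (∫ zu, (∑ i : Fin r,
      (2 * ((v : ℝ) - r + 1) * ψ i (lf zu.2) + ((v : ℝ) - r + 1) * ψ i (lf zu.2) ^ 2 +
        4 * lf zu.2 i * (1 + ψ i (lf zu.2)) * ψd i (lf zu.2) +
        ∑ j ∈ univ.erase i,
          (lf zu.2 i * (2 * ψ i (lf zu.2) + ψ i (lf zu.2) ^ 2) -
            lf zu.2 j * (2 * ψ j (lf zu.2) + ψ j (lf zu.2) ^ 2)) /
            (lf zu.2 i - lf zu.2 j))) ∂μstar) - 2 * (v : ℝ) * lam := by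
    rw [integral_sub hint₄' (integrable_const _), integral_const]
    simp
  rw [hLHS, hSH', hRHSint]
  have hc : a₀ ^ 2 * Kstar * (2 * (v : ℝ) * lam) = 2 * a₀ * lam := by
    have h : a₀ ^ 2 * Kstar * (2 * (v : ℝ) * lam) = (a₀ * (Kstar * (v:ℝ))) * (2 * a₀ * lam) := by
      ring
    rw [h, hKv, one_mul]
  nlinarith [mul_nonneg (mul_nonneg (by norm_num : (0:ℝ) ≤ 2) ha₀pos.le)
    (sub_nonneg.mpr h2lam), hc]
end
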